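/- arXiv:1408.1855 — 4 statements merged into one kernel-verified Lean document; each statement's English description precedes it below -/
import Mathlib

section
/- Let Σ_P = diag(σ₁I₂, …, σₙI₂) with all σⱼ > 0, and let Q be a real symmetric positive semidefinite 2n×2n matrix satisfying Jₙ Σ_P⁻¹ Q Σ_P Jₙ = -Q, where Jₙ = Iₙ ⊗ [[0,1],[-1,0]]. Then, writing Q = [Q_{jk}] in 2×2 blocks: each diagonal block Q_{jj} is a scalar multiple of I₂; each off-diagonal block Q_{jk} with σⱼ ≠ σₖ is zero; and each off-diagonal block with σⱼ = σₖ has the form [[q₁, q₂],[-q₂, q₁]] with Q_{kj} = Q_{jk}ᵀ. -/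
open Matrix Kronecker Polynomial

/-- The 2×2 symplectic form matrix [[0,1],[-1,0]]. -/
noncomputable def Jb : Matrix (Fin 2) (Fin 2) ℝ := !![0, 1; -1, 0]

/-- Jₙ = Iₙ ⊗ J₁, indexed by pairs (block index, position within block). -/
noncomputable def Jmat (n : ℕ) : Matrix (Fin n × Fin 2) (Fin n × Fin 2) ℝ :=
  (1 : Matrix (Fin n) (Fin n) ℝ) ⊗ₖ Jb

/-- Block-scalar diagonal matrix diag(σ₁I₂, …, σₙI₂). -/
noncomputable def SigmaD {n : ℕ} (σ : Fin n → ℝ) : Matrix (Fin n × Fin 2) (Fin n × Fin 2) ℝ :=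
  Matrix.of fun p q => if p = q then σ p.1 else 0

theorem stmt1 (n : ℕ) (σ : Fin n → ℝ) (hσ : ∀ j, 0 < σ j)
    (Q : Matrix (Fin n × Fin 2) (Fin n × Fin 2) ℝ)
    (hQ : Q.PosSemidef)
    (hEq : Jmat n * (SigmaD σ)⁻¹ * Q * SigmaD σ * Jmat n = -Q) :
    (∀ j : Fin n, ∀ a b : Fin 2,
        Q (j, a) (j, b) = if a = b then Q (j, 0) (j, 0) else 0) ∧
    (∀ j k : Fin n, j ≠ k → σ j ≠ σ k → ∀ a b : Fin 2, Q (j, a) (k, b) = 0) ∧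
    (∀ j k : Fin n, j ≠ k → σ j = σ k →
        Q (j, 1) (k, 1) = Q (j, 0) (k, 0) ∧
        Q (j, 1) (k, 0) = - Q (j, 0) (k, 1) ∧
        (∀ a b : Fin 2, Q (k, a) (j, b) = Q (j, b) (k, a))) := by
  -- symmetry of Q
  have hsymm : ∀ p q, Q p q = Q q p := by
    intro p q
    calc Q p q = Qᴴ p q := by rw [hQ.1]
    _ = Q q p := by simp [Matrix.conjTranspose_apply]
  -- inverse of SigmaD
  have hinv : (SigmaD σ)⁻¹ = SigmaD (fun j => (σ j)⁻¹) := by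
    apply Matrix.inv_eq_right_inv
    ext p q
    simp [SigmaD, Matrix.mul_apply, Matrix.one_apply, ite_mul, mul_ite]
    split
    · next h => subst h; exact mul_inv_cancel₀ (hσ p.1).ne'
    · rfl
  -- entrywise form of the hypothesis
  have key : ∀ (j k : Fin n) (a b : Fin 2),
      (σ j)⁻¹ * (σ k * (∑ a' : Fin 2, ∑ b' : Fin 2, Jb a a' * Q (j,a') (k,b') * Jb b' b))
        = - Q (j,a) (k,b) := by
    intro j k a b
    have h := congrFun (congrFun hEq (j,a)) (k,b)
    rw [hinv, Matrix.neg_apply] at h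
    rw [← h]
    simp [Jmat, SigmaD, Matrix.mul_apply, Fintype.sum_prod_type, Matrix.one_apply,
      ite_mul, mul_ite, Finset.sum_ite_eq, Finset.sum_ite_eq', Finset.mul_sum, Finset.sum_mul]
    ring
  -- the four scalar relations per block
  have keys : ∀ j k : Fin n,
      σ k * Q (j,1) (k,1) = σ j * Q (j,0) (k,0) ∧
      σ k * Q (j,0) (k,0) = σ j * Q (j,1) (k,1) ∧
      σ k * Q (j,1) (k,0) = -(σ j * Q (j,0) (k,1)) ∧
      σ k * Q (j,0) (k,1) = -(σ j * Q (j,1) (k,0)) := by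
    intro j k
    have hj : σ j ≠ 0 := (hσ j).ne'
    refine ⟨?_, ?_, ?_, ?_⟩
    · have h := key j k 0 0
      simp [Jb, Fin.sum_univ_two] at h
      field_simp at h
      linarith
    · have h := key j k 1 1
      simp [Jb, Fin.sum_univ_two] at h
      field_simp at h
      linarith
    · have h := key j k 0 1
      simp [Jb, Fin.sum_univ_two] at h
      field_simp at h
      linarith
    · have h := key j k 1 0
      simp [Jb, Fin.sum_univ_two] at h
      field_simp at h
      linarith
  refine ⟨?_, ?_, ?_⟩
  · -- diagonal blocks
    intro j a b
    have hj : σ j ≠ 0 := (hσ j).ne'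
    obtain ⟨e1, _, e3, _⟩ := keys j j
    have h11 : Q (j,1) (j,1) = Q (j,0) (j,0) := mul_left_cancel₀ hj e1
    have h10 : Q (j,1) (j,0) = -Q (j,0) (j,1) := by
      apply mul_left_cancel₀ hj
      linear_combination e3
    have h01 : Q (j,0) (j,1) = 0 := by
      have hs := hsymm (j,0) (j,1)
      rw [h10] at hs
      linarith
    have h10' : Q (j,1) (j,0) = 0 := by rw [h10, h01]; ring
    fin_cases a <;> fin_cases b <;> simp [h11, h01, h10']
  · -- off-diagonal blocks with distinct σ's
    intro j k _hjk hσne a b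
    have hj : σ j ≠ 0 := (hσ j).ne'
    have hd : σ k - σ j ≠ 0 := sub_ne_zero.mpr (Ne.symm hσne)
    have hs : σ k + σ j ≠ 0 := by have := hσ j; have := hσ k; positivity
    obtain ⟨e1, e2, e3, e4⟩ := keys j k
    have h11 : Q (j,1) (k,1) = 0 := by
      have h2 : (σ k - σ j) * ((σ k + σ j) * Q (j,1) (k,1)) = 0 := by
        linear_combination σ k * e1 + σ j * e2
      rcases mul_eq_zero.mp h2 with h | h
      · exact absurd h hd
      · exact (mul_eq_zero.mp h).resolve_left hs
    have h00 : Q (j,0) (k,0) = 0 := by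
      have : σ j * Q (j,0) (k,0) = 0 := by rw [← e1, h11]; ring
      exact (mul_eq_zero.mp this).resolve_left hj
    have h10 : Q (j,1) (k,0) = 0 := by
      have h2 : (σ k - σ j) * ((σ k + σ j) * Q (j,1) (k,0)) = 0 := by
        linear_combination σ k * e3 - σ j * e4
      rcases mul_eq_zero.mp h2 with h | h
      · exact absurd h hd
      · exact (mul_eq_zero.mp h).resolve_left hs
    have h01 : Q (j,0) (k,1) = 0 := by
      have : σ j * Q (j,0) (k,1) = 0 := by
        have := e3; rw [h10] at this; linarith
      exact (mul_eq_zero.mp this).resolve_left hj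
    fin_cases a <;> fin_cases b <;> assumption
  · -- off-diagonal blocks with equal σ's
    intro j k _hjk hσeq
    have hj : σ j ≠ 0 := (hσ j).ne'
    obtain ⟨e1, _, e3, _⟩ := keys j k
    rw [← hσeq] at e1 e3
    refine ⟨mul_left_cancel₀ hj e1, ?_, fun a b => hsymm (k,a) (j,b)⟩
    apply mul_left_cancel₀ hj
    linear_combination e3
end

section
/- Suppose T is a real symplectic 2n×2n matrix (TJₙTᵀ = Jₙ) that is also Σ_P-unitary (TΣ_PTᵀ = Σ_P), where Σ_P = diag(σ₁I₂,…,σₙI₂) with σⱼ > 0. If Q is a real symmetric matrix such that T^{-T}QT⁻¹ = Σ_Q for some Σ_Q = diag(τ₁I₂,…,τₙI₂) with τⱼ ≥ 0, then Jₙ Σ_P⁻¹ Q Σ_P Jₙ = -Q. -/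
open Matrix Kronecker Polynomial

/-!
Symplecticity and `Σ_P`-unitarity give two expressions for the inverse, `T⁻¹ = J Tᵀ J⁻¹ = Σ_P Tᵀ Σ_P⁻¹`,
so `Tᵀ` commutes with `K = Σ_P⁻¹ J`; as `Kᵀ = -K`, so does `T`. Since `K` also commutes with the
block-scalar `Σ_Q` and `K Σ_P J = J² = -1`, writing `Q = Tᵀ Σ_Q T` gives
`J Σ_P⁻¹ Q Σ_P J = K Tᵀ Σ_Q T Σ_P J = Tᵀ Σ_Q T K Σ_P J = -Q`.
-/

namespace Matrix

theorem _root_.Commute.transpose {m R : Type*} [Fintype m] [CommSemiring R] {A B : Matrix m m R}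
    (h : Commute A B) : Commute Aᵀ Bᵀ := by
  rw [commute_iff_eq, ← transpose_mul, ← transpose_mul, h.eq]

variable {m R : Type*} [Fintype m] [DecidableEq m] [CommRing R] {A B T : Matrix m m R}

theorem inv_eq_of_mul_mul_transpose_eq (hA : IsUnit A.det) (h : T * A * Tᵀ = A) :
    T⁻¹ = A * Tᵀ * A⁻¹ :=
  inv_eq_right_inv (by rw [← mul_assoc, ← mul_assoc, h, mul_nonsing_inv A hA])

theorem isUnit_det_of_mul_mul_transpose_eq (hA : IsUnit A.det) (h : T * A * Tᵀ = A) :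
    IsUnit T.det :=
  isUnit_det_of_right_inverse (B := A * Tᵀ * A⁻¹)
    (by rw [← mul_assoc, ← mul_assoc, h, mul_nonsing_inv A hA])

theorem commute_transpose_inv_mul_of_mul_mul_transpose_eq (hA : IsUnit A.det)
    (hB : IsUnit B.det) (hTA : T * A * Tᵀ = A) (hTB : T * B * Tᵀ = B) :
    Commute Tᵀ (B⁻¹ * A) := by
  have key : A * Tᵀ * A⁻¹ = B * Tᵀ * B⁻¹ :=
    (inv_eq_of_mul_mul_transpose_eq hA hTA).symm.trans (inv_eq_of_mul_mul_transpose_eq hB hTB)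
  calc Tᵀ * (B⁻¹ * A) = B⁻¹ * (B * Tᵀ * B⁻¹) * A := by
        simp only [mul_assoc, nonsing_inv_mul B hB, ← mul_assoc B⁻¹, one_mul]
    _ = B⁻¹ * A * Tᵀ := by
        rw [← key]; simp only [mul_assoc, nonsing_inv_mul A hA, mul_one]

end Matrix

open Matrix

section BlockMatrices

variable {n : ℕ}

theorem SigmaD_eq_diagonal_kronecker_one (σ : Fin n → ℝ) : SigmaD σ = diagonal σ ⊗ₖ 1 := by
  ext ⟨i, a⟩ ⟨j, b⟩
  by_cases hij : i = j <;> by_cases hab : a = b <;> simp [SigmaD, one_apply, hij, hab]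

theorem SigmaD_mul_SigmaD (f g : Fin n → ℝ) : SigmaD f * SigmaD g = SigmaD (f * g) := by
  simp only [SigmaD_eq_diagonal_kronecker_one, ← mul_kronecker_mul, diagonal_mul_diagonal',
    mul_one]
  rfl

theorem SigmaD_one : SigmaD (1 : Fin n → ℝ) = 1 := by
  rw [SigmaD_eq_diagonal_kronecker_one, diagonal_one', one_kronecker_one]

theorem transpose_SigmaD (f : Fin n → ℝ) : (SigmaD f)ᵀ = SigmaD f := by
  rw [SigmaD_eq_diagonal_kronecker_one, ← kroneckerMap_transpose, diagonal_transpose,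
    transpose_one]

theorem SigmaD_mul_SigmaD_inv {σ : Fin n → ℝ} (hσ : ∀ j, σ j ≠ 0) :
    SigmaD σ * SigmaD σ⁻¹ = 1 := by
  rw [SigmaD_mul_SigmaD, ← SigmaD_one]
  congr 1
  ext j
  exact mul_inv_cancel₀ (hσ j)

theorem inv_SigmaD {σ : Fin n → ℝ} (hσ : ∀ j, σ j ≠ 0) : (SigmaD σ)⁻¹ = SigmaD σ⁻¹ :=
  inv_eq_right_inv (SigmaD_mul_SigmaD_inv hσ)

theorem isUnit_det_SigmaD {σ : Fin n → ℝ} (hσ : ∀ j, σ j ≠ 0) : IsUnit (SigmaD σ).det :=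
  isUnit_det_of_right_inverse (SigmaD_mul_SigmaD_inv hσ)

theorem commute_SigmaD_SigmaD (f g : Fin n → ℝ) : Commute (SigmaD f) (SigmaD g) := by
  rw [commute_iff_eq, SigmaD_mul_SigmaD, SigmaD_mul_SigmaD, mul_comm f]

theorem commute_SigmaD_Jmat (f : Fin n → ℝ) : Commute (SigmaD f) (Jmat n) := by
  rw [commute_iff_eq, SigmaD_eq_diagonal_kronecker_one, Jmat, ← mul_kronecker_mul,
    ← mul_kronecker_mul, mul_one, one_mul, mul_one, one_mul]

theorem Jmat_mul_Jmat : Jmat n * Jmat n = -1 := by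
  have hJb : Jb * Jb = -1 := by
    ext i j
    fin_cases i <;> fin_cases j <;> simp [Jb]
  rw [Jmat, ← mul_kronecker_mul, one_mul, hJb]
  ext ⟨i, a⟩ ⟨j, b⟩
  by_cases hij : i = j <;> by_cases hab : a = b <;> simp [one_apply, hij, hab]

theorem transpose_Jmat : (Jmat n)ᵀ = -Jmat n := by
  ext ⟨i, a⟩ ⟨j, b⟩
  by_cases hij : i = j
  · subst hij
    fin_cases a <;> fin_cases b <;> simp [Jmat, Jb]
  · simp [Jmat, one_apply, hij, Ne.symm hij]

theorem isUnit_det_Jmat : IsUnit (Jmat n).det :=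
  isUnit_det_of_right_inverse (B := -Jmat n) (by rw [mul_neg, Jmat_mul_Jmat, neg_neg])

end BlockMatrices

theorem stmt4_general (n : ℕ) (σ : Fin n → ℝ) (hσ : ∀ j, 0 < σ j)
    (T : Matrix (Fin n × Fin 2) (Fin n × Fin 2) ℝ)
    (hTsymp : T * Jmat n * Tᵀ = Jmat n)
    (hTunit : T * SigmaD σ * Tᵀ = SigmaD σ)
    (Q : Matrix (Fin n × Fin 2) (Fin n × Fin 2) ℝ)
    (τ : Fin n → ℝ)
    (hdiag : (T⁻¹)ᵀ * Q * T⁻¹ = SigmaD τ) :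
    Jmat n * (SigmaD σ)⁻¹ * Q * SigmaD σ * Jmat n = -Q := by
  have hσ₀ : ∀ j, σ j ≠ 0 := fun j => (hσ j).ne'
  have hT : IsUnit T.det := isUnit_det_of_mul_mul_transpose_eq isUnit_det_Jmat hTsymp
  have hQ : Q = Tᵀ * SigmaD τ * T := by
    rw [← hdiag, transpose_nonsing_inv]
    simp only [← mul_assoc, mul_nonsing_inv _ (isUnit_det_transpose T hT), one_mul]
    rw [mul_assoc, nonsing_inv_mul T hT, mul_one]
  have hKTt : Commute Tᵀ (SigmaD σ⁻¹ * Jmat n) := by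
    simpa only [inv_SigmaD hσ₀] using commute_transpose_inv_mul_of_mul_mul_transpose_eq
      isUnit_det_Jmat (isUnit_det_SigmaD hσ₀) hTsymp hTunit
  have hKT : Commute T (SigmaD σ⁻¹ * Jmat n) := by
    have h := hKTt.transpose
    rwa [transpose_transpose, transpose_mul, transpose_Jmat, transpose_SigmaD, neg_mul,
      Commute.neg_right_iff, ← (commute_SigmaD_Jmat _).eq] at h
  have hKD : Commute (SigmaD τ) (SigmaD σ⁻¹ * Jmat n) :=
    (commute_SigmaD_SigmaD _ _).mul_right (commute_SigmaD_Jmat _)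
  have hKSJ : SigmaD σ⁻¹ * Jmat n * (SigmaD σ * Jmat n) = -1 := by
    rw [mul_assoc, ← mul_assoc (Jmat n), ← (commute_SigmaD_Jmat σ).eq, mul_assoc, ← mul_assoc,
      (commute_SigmaD_SigmaD _ _).eq, SigmaD_mul_SigmaD_inv hσ₀, one_mul, Jmat_mul_Jmat]
  calc Jmat n * (SigmaD σ)⁻¹ * Q * SigmaD σ * Jmat n
      = SigmaD σ⁻¹ * Jmat n * (Tᵀ * (SigmaD τ * (T * (SigmaD σ * Jmat n)))) := by
        rw [hQ, inv_SigmaD hσ₀, ← (commute_SigmaD_Jmat _).eq]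
        simp only [mul_assoc]
    _ = Tᵀ * (SigmaD τ * (T * (SigmaD σ⁻¹ * Jmat n * (SigmaD σ * Jmat n)))) := by
        rw [hKTt.symm.left_comm, hKD.symm.left_comm, hKT.symm.left_comm]
    _ = -Q := by
        rw [hKSJ, hQ]; simp only [mul_neg, mul_one, mul_assoc]

theorem stmt4 (n : ℕ) (σ : Fin n → ℝ) (hσ : ∀ j, 0 < σ j)
    (T : Matrix (Fin n × Fin 2) (Fin n × Fin 2) ℝ)
    (hTsymp : T * Jmat n * Tᵀ = Jmat n)
    (hTunit : T * SigmaD σ * Tᵀ = SigmaD σ)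
    (Q : Matrix (Fin n × Fin 2) (Fin n × Fin 2) ℝ) (hQ : Q.IsSymm)
    (τ : Fin n → ℝ) (hτ : ∀ j, 0 ≤ τ j)
    (hdiag : (T⁻¹)ᵀ * Q * T⁻¹ = SigmaD τ) :
    Jmat n * (SigmaD σ)⁻¹ * Q * SigmaD σ * Jmat n = -Q :=
  stmt4_general n σ hσ T hTsymp hTunit Q τ hdiag
end

section
/- Let R ∈ ℝ^{2n×2n} be symmetric and skew-Hamiltonian (JₙR = RJₙ) and let K ∈ ℂ^{m×2n} be of the passive form K = [M₁, iM₁, …, Mₙ, iMₙ]. Define A = 2Jₙ(R + Im(K†K)) and BBᵀ = 4Jₙ Re(K†K) Jₙᵀ. Then P = I_{2n} solves the Lyapunov equation AP + PAᵀ + BBᵀ = 0; that is, A + Aᵀ + BBᵀ = 0. -/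
/-!
Write `X = Re K`, `Y = Im K`. The passive form of `K` says exactly `X Jₙ = Y`; together with
`Jₙ² = -1` and `Jₙᵀ = -Jₙ` this makes `G = Re(K†K) = XᵀX + YᵀY` commute with `Jₙ`, with
`G Jₙ = Jₙ G = S := Im(K†K)`. Since `R` commutes with `Jₙ`, `A + Aᵀ = 2(Jₙ S + S Jₙ) = 4 S Jₙ`,
while `BBᵀ = -4 Jₙ G Jₙ = -4 S Jₙ`.
-/

open Matrix Kronecker Polynomial

lemma Jb_transpose : Jbᵀ = -Jb := by
  ext i j; fin_cases i <;> fin_cases j <;> simp [Jb]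

lemma Jb_mul_self : Jb * Jb = -1 := by
  ext i j; fin_cases i <;> fin_cases j <;> simp [Jb]

lemma Jmat_transpose (n : ℕ) : (Jmat n)ᵀ = -Jmat n := by
  rw [Jmat, ← kroneckerMap_transpose, transpose_one, Jb_transpose, ← neg_one_smul ℝ Jb,
    kronecker_smul, neg_one_smul]

lemma Jmat_mul_self (n : ℕ) : Jmat n * Jmat n = -1 := by
  rw [Jmat, ← mul_kronecker_mul, Matrix.one_mul, Jb_mul_self, ← neg_one_smul ℝ 1, kronecker_smul,
    one_kronecker_one, neg_one_smul]

lemma re_mul_Jmat_eq_im {n m : ℕ} {K : Matrix (Fin m) (Fin n × Fin 2) ℂ}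
    (hK : ∀ (ℓ : Fin m) (j : Fin n), K ℓ (j, 1) = Complex.I * K ℓ (j, 0)) :
    K.map Complex.re * Jmat n = K.map Complex.im := by
  ext ℓ ⟨k, t⟩
  fin_cases t <;> simp [Jmat, Jb, mul_apply, Fintype.sum_prod_type, one_apply, hK]

section SkewComplexStructure

variable {ι κ α : Type*} [Fintype ι] [CommRing α] {J : Matrix ι ι α}
  {X Y : Matrix κ ι α}

lemma mul_eq_neg_of_mul_eq [DecidableEq ι] (hJJ : J * J = -1) (hXY : X * J = Y) :
    Y * J = -X := by
  rw [← hXY, Matrix.mul_assoc, hJJ, Matrix.mul_neg, Matrix.mul_one]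

lemma gram_mul_eq_of_mul_eq [Fintype κ] [DecidableEq ι] (hJJ : J * J = -1) (hXY : X * J = Y) :
    (Xᵀ * X + Yᵀ * Y) * J = Xᵀ * Y - Yᵀ * X := by
  rw [Matrix.add_mul, Matrix.mul_assoc, Matrix.mul_assoc, hXY, mul_eq_neg_of_mul_eq hJJ hXY,
    Matrix.mul_neg, sub_eq_add_neg]

lemma mul_gram_eq_of_mul_eq [Fintype κ] [DecidableEq ι] (hJt : Jᵀ = -J) (hJJ : J * J = -1)
    (hXY : X * J = Y) : J * (Xᵀ * X + Yᵀ * Y) = Xᵀ * Y - Yᵀ * X := by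
  have h := congrArg Matrix.transpose (gram_mul_eq_of_mul_eq hJJ hXY)
  simp only [transpose_mul, transpose_add, transpose_sub, transpose_transpose, hJt,
    Matrix.neg_mul] at h
  rw [← neg_sub, ← h, neg_neg]

lemma lyapunov_identity [Fintype κ] [DecidableEq ι] (hJt : Jᵀ = -J) (hJJ : J * J = -1)
    (hXY : X * J = Y) {R : Matrix ι ι α} (hR : R.IsSymm) (hRJ : J * R = R * J) :
    (2 : α) • (J * (R + (Xᵀ * Y - Yᵀ * X))) + ((2 : α) • (J * (R + (Xᵀ * Y - Yᵀ * X))))ᵀ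
      + (4 : α) • (J * (Xᵀ * X + Yᵀ * Y) * Jᵀ) = 0 := by
  have hG := gram_mul_eq_of_mul_eq hJJ hXY
  have hJG := mul_gram_eq_of_mul_eq hJt hJJ hXY
  set G := Xᵀ * X + Yᵀ * Y
  set S := Xᵀ * Y - Yᵀ * X
  have hS : Sᵀ = -S := by
    rw [transpose_sub, transpose_mul, transpose_mul, transpose_transpose, transpose_transpose,
      neg_sub]
  have hJS : J * S = S * J := by
    calc J * S = J * (G * J) := by rw [hG]
      _ = S * J := by rw [← Matrix.mul_assoc, hJG]
  rw [transpose_smul, transpose_mul, transpose_add, hR.eq, hS, hJt, hJG, Matrix.mul_add, hRJ, hJS]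
  simp only [Matrix.add_mul, Matrix.neg_mul, Matrix.mul_neg]
  module

end SkewComplexStructure

theorem stmt9 (n m : ℕ) (R : Matrix (Fin n × Fin 2) (Fin n × Fin 2) ℝ) (hR : R.IsSymm)
    (hRsh : Jmat n * R = R * Jmat n)
    (K : Matrix (Fin m) (Fin n × Fin 2) ℂ)
    (hK : ∀ (ℓ : Fin m) (j : Fin n), K ℓ (j, 1) = Complex.I * K ℓ (j, 0))
    (A BBt : Matrix (Fin n × Fin 2) (Fin n × Fin 2) ℝ)
    (hA : A = (2 : ℝ) • (Jmat n *
        (R + ((K.map Complex.re)ᵀ * K.map Complex.im - (K.map Complex.im)ᵀ * K.map Complex.re))))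
    (hB : BBt = (4 : ℝ) • (Jmat n *
        ((K.map Complex.re)ᵀ * K.map Complex.re + (K.map Complex.im)ᵀ * K.map Complex.im) * (Jmat n)ᵀ)) :
    A + Aᵀ + BBt = 0 := by
  subst hA hB
  exact lyapunov_identity (Jmat_transpose n) (Jmat_mul_self n) (re_mul_Jmat_eq_im hK) hR hRsh
end

section
/- Let Σ_P = diag(σ₁I₂, …, σₙI₂) with σⱼ > 0 and Q symmetric positive semidefinite satisfying Jₙ Σ_P⁻¹ Q Σ_P Jₙ = -Q, where Jₙ = Iₙ ⊗ [[0,1],[-1,0]]. Then for every j ∈ {1,…,n}, the (2j-1, 2j-1) and (2j, 2j) entries of Q are equal and the (2j-1, 2j) entry of Q is zero. -/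
open Matrix Kronecker Polynomial

lemma SigmaD_eq {n : ℕ} (σ : Fin n → ℝ) :
    SigmaD σ = Matrix.diagonal (fun p => σ p.1) := by
  ext p q
  simp [SigmaD, Matrix.diagonal]

lemma SigmaD_inv {n : ℕ} (σ : Fin n → ℝ) (h0 : ∀ j, σ j ≠ 0) :
    (SigmaD σ)⁻¹ = Matrix.diagonal (fun p => (σ p.1)⁻¹) := by
  apply Matrix.inv_eq_right_inv
  rw [SigmaD_eq, Matrix.diagonal_mul_diagonal]
  ext p q
  simp [Matrix.diagonal_apply, Matrix.one_apply, mul_inv_cancel₀ (h0 p.1)]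

theorem stmt14 (n : ℕ) (σ : Fin n → ℝ) (hσ : ∀ j, 0 < σ j)
    (Q : Matrix (Fin n × Fin 2) (Fin n × Fin 2) ℝ) (hQ : Q.PosSemidef)
    (hEq : Jmat n * (SigmaD σ)⁻¹ * Q * SigmaD σ * Jmat n = -Q) :
    ∀ j : Fin n, Q (j, 0) (j, 0) = Q (j, 1) (j, 1) ∧ Q (j, 0) (j, 1) = 0 := by
  intro j
  have hsym := hQ.1
  have hs : Q (j, 1) (j, 0) = Q (j, 0) (j, 1) := by
    have := congrFun (congrFun hsym.symm (j, 0)) (j, 1)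
    simpa [Matrix.transpose_apply] using this.symm
  have hne : σ j ≠ 0 := (hσ j).ne'
  have h00 := congrFun (congrFun hEq (j, 0)) (j, 0)
  have h01 := congrFun (congrFun hEq (j, 0)) (j, 1)
  rw [SigmaD_inv σ (fun j => (hσ j).ne')] at h00 h01
  simp [Matrix.mul_apply, Jmat, SigmaD, Jb, Matrix.kroneckerMap_apply,
    Matrix.one_apply, Matrix.diagonal_apply, Fintype.sum_prod_type, Fin.sum_univ_two,
    Prod.mk.injEq, Finset.sum_ite_eq, Finset.sum_ite_eq', ite_mul, mul_ite,
    Fin.isValue, mul_comm, mul_assoc, mul_left_comm, inv_mul_cancel_left₀ hne] at h00 h01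
  rw [mul_inv_cancel_left₀ hne] at h00 h01
  exact ⟨h00.symm, by linarith⟩
end
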